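/- Let 𝕂 be ℝ or ℂ, let 0 ≤ |λ_1|, |λ_2| < 1 with λ_1, λ_2 ∈ 𝕂, and let A_1 = [[0,1],[λ_1,0]], A_2 = [[0,λ_2],[1,0]]. Then the pair 𝒜 = (A_1, A_2) is irreducible, ϱ(𝒜) = 1 = ρ(A_1A_2), the norm ‖(x,y)ᵀ‖ = max{|x|,|y|} is a Barabanov norm for 𝒜 and every Barabanov norm for 𝒜 is a scalar multiple of it, 𝒜 satisfies the strong finiteness hypothesis with characteristic word (1,2), and 𝒜 has the unbounded agreements property and the rank one property. -/

import Mathlib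

open Filter Topology

noncomputable section

namespace JSRPaper

variable {𝕂 : Type*} [RCLike 𝕂] {ι : Type*} [Fintype ι] [DecidableEq ι] {r : ℕ}

/-- The Euclidean operator norm of a matrix, i.e. the operator norm induced by the
Euclidean norm on `𝕂^ι`. -/
noncomputable def eNorm (A : Matrix ι ι 𝕂) : ℝ :=
  ‖Matrix.toEuclideanCLM (𝕜 := 𝕂) A‖

/-- The product `A_{i n} ⋯ A_{i 1}` associated to the word `i : Fin n → Fin r`. -/
noncomputable def wordProd (A : Fin r → Matrix ι ι 𝕂) {n : ℕ} (i : Fin n → Fin r) :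
    Matrix ι ι 𝕂 :=
  ((List.ofFn fun k => A (i k)).reverse).prod

/-- The joint spectral radius of the tuple `A`, expressed via the standard
characterisation `ϱ(𝒜) = inf_n max_{|i| = n} ‖A_{i_n} ⋯ A_{i_1}‖^{1/n}`
(the infimum equals the limit). -/
noncomputable def jsr (A : Fin r → Matrix ι ι 𝕂) : ℝ :=
  ⨅ n : ℕ+, (⨆ i : Fin (n : ℕ) → Fin r, eNorm (wordProd A i)) ^ ((n : ℝ)⁻¹)

/-- The spectral radius of a matrix, via Gelfand's formula
`ρ(A) = inf_k ‖A^k‖^{1/k}` (the infimum equals the limit). -/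
noncomputable def specRad (A : Matrix ι ι 𝕂) : ℝ :=
  ⨅ k : ℕ+, eNorm (A ^ (k : ℕ)) ^ (((k : ℕ) : ℝ)⁻¹)

/-- `N` is a norm on `𝕂^ι`. -/
def IsNorm (N : EuclideanSpace 𝕂 ι → ℝ) : Prop :=
  (∀ v, N v = 0 ↔ v = 0) ∧ (∀ (c : 𝕂) (v), N (c • v) = ‖c‖ * N v) ∧
    ∀ u v, N (u + v) ≤ N u + N v

/-- The operator norm of the matrix `A` induced by the norm `N` on `𝕂^ι`. -/
noncomputable def opNormWrt (N : EuclideanSpace 𝕂 ι → ℝ) (A : Matrix ι ι 𝕂) : ℝ :=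
  sSup {x : ℝ | ∃ v, N v ≤ 1 ∧ x = N (Matrix.toEuclideanCLM (𝕜 := 𝕂) A v)}

/-- `N` is a Barabanov norm for the tuple `A` : it is a norm and
`ϱ(𝒜) ‖v‖ = max_i ‖A_i v‖` for every `v`. -/
def IsBarabanov (A : Fin r → Matrix ι ι 𝕂) (N : EuclideanSpace 𝕂 ι → ℝ) : Prop :=
  IsNorm N ∧ ∀ v, jsr A * N v = ⨆ i : Fin r, N (Matrix.toEuclideanCLM (𝕜 := 𝕂) (A i) v)

/-- The tuple `A` is irreducible: no subspace of `𝕂^ι` other than `⊥` and `⊤`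
is invariant under every `A i`. -/
def IsIrreducible (A : Fin r → Matrix ι ι 𝕂) : Prop :=
  ∀ V : Submodule 𝕂 (EuclideanSpace 𝕂 ι),
    (∀ i, ∀ v ∈ V, Matrix.toEuclideanCLM (𝕜 := 𝕂) (A i) v ∈ V) → V = ⊥ ∨ V = ⊤

/-- Two words of length `n` are rotation equivalent if one is a cyclic shift of the other. -/
def RotEquiv {n : ℕ} (z w : Fin n → Fin r) : Prop :=
  ∃ k : ℕ, ∀ j : Fin n, z j = w ⟨(j.val + k) % n, Nat.mod_lt _ j.pos⟩

/-- The tuple `A` satisfies the strong finiteness hypothesis with characteristic word `ω`: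
for every Barabanov norm `N` for `A`, every word of the same length as `ω` which is not
rotation equivalent to `ω` has `N`-operator-norm product strictly less than `ϱ(𝒜)^n`. -/
def StrongFinHyp (A : Fin r → Matrix ι ι 𝕂) {n : ℕ} (ω : Fin n → Fin r) : Prop :=
  ∀ N : EuclideanSpace 𝕂 ι → ℝ, IsBarabanov A N →
    ∀ z : Fin n → Fin r, ¬ RotEquiv z ω → opNormWrt N (wordProd A z) < jsr A ^ n

/-- The tuple `A` is relatively product bounded : `ϱ(𝒜) > 0` and the set of normalised
products `ϱ(𝒜)^{-n} A_{i_n} ⋯ A_{i_1}` is bounded. -/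
def RelProdBounded (A : Fin r → Matrix ι ι 𝕂) : Prop :=
  0 < jsr A ∧ ∃ C : ℝ, ∀ (n : ℕ) (i : Fin n → Fin r), eNorm (wordProd A i) ≤ C * jsr A ^ n

/-- The limit semigroup `𝒮(𝒜) = ⋂_{m ≥ 1} closure (⋃_{n ≥ m} ϱ(𝒜)^{-n} 𝒜_n)`,
written out via the metric characterisation of the closure. -/
def limitSemigroup (A : Fin r → Matrix ι ι 𝕂) : Set (Matrix ι ι 𝕂) :=
  {B | ∀ m : ℕ, ∀ ε > (0 : ℝ), ∃ n : ℕ, m ≤ n ∧ ∃ i : Fin n → Fin r,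
    eNorm ((jsr A ^ n)⁻¹ • wordProd A i - B) < ε}

/-- The tuple `A` has the rank one property: it is relatively product bounded and every
nonzero element of the limit semigroup has rank one. -/
def RankOneProp (A : Fin r → Matrix ι ι 𝕂) : Prop :=
  RelProdBounded A ∧ ∀ B ∈ limitSemigroup A, B ≠ 0 → B.rank = 1

/-- The product `A_{i n} ⋯ A_{i 1}` along the first `n` terms of the sequence `i`
(indexed from `1`). -/
noncomputable def seqProd (A : Fin r → Matrix ι ι 𝕂) (i : ℕ → Fin r) (n : ℕ) :
    Matrix ι ι 𝕂 :=
  wordProd A fun k : Fin n => i (k.val + 1)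

/-- The unbounded agreements property: any two sequences whose normalised partial
products do not tend to zero (i.e. `limsup ‖A_{i(n)} ⋯ A_{i(1)}‖ / ϱ(𝒜)^n > 0`) contain
arbitrarily long identical blocks. -/
def UnboundedAgreements (A : Fin r → Matrix ι ι 𝕂) : Prop :=
  ∀ N : ℕ, ∀ i₁ i₂ : ℕ → Fin r,
    (∃ c > (0 : ℝ), ∀ m : ℕ, ∃ n, m ≤ n ∧ c ≤ eNorm (seqProd A i₁ n) / jsr A ^ n) →
    (∃ c > (0 : ℝ), ∀ m : ℕ, ∃ n, m ≤ n ∧ c ≤ eNorm (seqProd A i₂ n) / jsr A ^ n) →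
    ∃ n₁ n₂ : ℕ, ∀ k : ℕ, 1 ≤ k → k ≤ N → i₁ (n₁ + k) = i₂ (n₂ + k)

/-- The finiteness property: some periodic product realises the joint spectral radius,
`ρ(A_{i_n} ⋯ A_{i_1})^{1/n} = ϱ(𝒜)`. -/
def FinitenessProp (A : Fin r → Matrix ι ι 𝕂) : Prop :=
  ∃ (n : ℕ) (_ : 0 < n) (i : Fin n → Fin r),
    specRad (wordProd A i) ^ ((n : ℝ)⁻¹) = jsr A

/-- The second exterior power (second compound matrix) of a `d × d` matrix, written
in the standard basis `(e_i ∧ e_j)_{i < j}` of `⋀² 𝕂^d`. -/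
noncomputable def ext2 {d : ℕ} (A : Matrix (Fin d) (Fin d) 𝕂) :
    Matrix {p : Fin d × Fin d // p.1 < p.2} {p : Fin d × Fin d // p.1 < p.2} 𝕂 :=
  fun p q => A p.1.1 q.1.1 * A p.1.2 q.1.2 - A p.1.1 q.1.2 * A p.1.2 q.1.1

/-- The word `ω` of length `n` is a power of a shorter word. -/
def IsPowerOfShorter {n : ℕ} (ω : Fin n → Fin r) : Prop :=
  ∃ (q : ℕ) (h0 : 0 < q) (h1 : q < n), q ∣ n ∧
    ∀ j : Fin n, ω j = ω ⟨j.val % q, lt_trans (Nat.mod_lt _ h0) h1⟩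

/-- `Θ_ω(𝒜)`: the supremum of `‖A_{ω_n} ⋯ A_{ω_1}‖^{1/n}` over all Barabanov norms. -/
noncomputable def Theta {n : ℕ} (ω : Fin n → Fin r) (A : Fin r → Matrix ι ι 𝕂) : ℝ :=
  sSup {x : ℝ | ∃ N, IsBarabanov A N ∧ x = opNormWrt N (wordProd A ω) ^ ((n : ℝ)⁻¹)}

end JSRPaper

/-!
Both matrices are antidiagonal and exchange the coordinate axes, so every product is
nonexpanding for the max-norm `‖(x, y)‖∞ = max(|x|, |y|)`, while at each step one of them
preserves it; hence `ϱ = 1` and `‖·‖∞` is a Barabanov norm. The squares `A_i² = λ_i I`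
contract, so a product of length two other than `A₁A₂`, `A₂A₁` has norm `< 1`, and a sequence
whose products do not decay must eventually alternate, which gives the unbounded agreements.
Since `|det A_i| = |λ_i| < 1`, every element of the limit semigroup is singular, hence of
rank at most one.

For uniqueness, unfolding the Barabanov equation twice shows that any Barabanov norm `N`
satisfies `N(x, y) = max(N(μx, y), N(x, μy))` with `μ = λ₁λ₂`. Iterating this drives one of
the coordinates to `0` up to an error `O(|μ|^k)`, and subadditivity together with
`N(x, 0) = N(0, x) = |x| N(1, 0)` then gives `N = N(1, 0) ‖·‖∞`.
-/

namespace JSRPaper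

open Matrix

section IsNorm

variable {𝕂 : Type*} [RCLike 𝕂] {ι : Type*} {N : EuclideanSpace 𝕂 ι → ℝ}

lemma IsNorm.map_zero (hN : IsNorm N) : N 0 = 0 :=
  (hN.1 0).2 rfl

lemma IsNorm.nonneg (hN : IsNorm N) (v : EuclideanSpace 𝕂 ι) : 0 ≤ N v := by
  have h := hN.2.2 v (-v)
  rw [add_neg_cancel, hN.map_zero, ← neg_one_smul 𝕂 v, hN.2.1, norm_neg, norm_one,
    one_mul] at h
  linarith

end IsNorm

section General

variable {𝕂 : Type*} [RCLike 𝕂] {ι : Type*} [Fintype ι] [DecidableEq ι] {r : ℕ}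

lemma opNormWrt_smul_one_le {N : EuclideanSpace 𝕂 ι → ℝ} (hN : IsNorm N) (c : 𝕂) :
    opNormWrt N (c • 1) ≤ ‖c‖ :=
  Real.sSup_le (by
    rintro _ ⟨v, hv, rfl⟩
    simpa [hN.2.1] using mul_le_of_le_one_right (norm_nonneg c) hv) (norm_nonneg c)

lemma wordProd_succ {n : ℕ} (A : Fin r → Matrix ι ι 𝕂) (i : Fin (n + 1) → Fin r) :
    wordProd A i = A (i (Fin.last n)) * wordProd A (Fin.init i) := by
  rw [wordProd, wordProd, List.ofFn_succ', List.concat_eq_append, List.reverse_append]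
  simp [Fin.init]

lemma wordProd_snoc {n : ℕ} (A : Fin r → Matrix ι ι 𝕂) (i : Fin n → Fin r) (j : Fin r) :
    wordProd A (Fin.snoc i j : Fin (n + 1) → Fin r) = A j * wordProd A i := by
  rw [wordProd_succ, Fin.snoc_last, Fin.init_snoc]

lemma wordProd_mem {S : Submonoid (Matrix ι ι 𝕂)} {A : Fin r → Matrix ι ι 𝕂} (hA : ∀ j, A j ∈ S)
    {n : ℕ} (i : Fin n → Fin r) : wordProd A i ∈ S :=
  S.list_prod_mem (by simp [hA])

lemma wordProd_fin_two (A : Fin r → Matrix ι ι 𝕂) (z : Fin 2 → Fin r) :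
    wordProd A z = A (z 1) * A (z 0) := by
  simp [wordProd, List.ofFn_succ]

lemma seqProd_succ (A : Fin r → Matrix ι ι 𝕂) (i : ℕ → Fin r) (n : ℕ) :
    seqProd A i (n + 1) = A (i (n + 1)) * seqProd A i n := by
  simp only [seqProd, wordProd_succ, Fin.val_last]
  rfl

lemma exists_word_le_apply {N : EuclideanSpace 𝕂 ι → ℝ} {A : Fin r → Matrix ι ι 𝕂}
    (hA : ∀ v, ∃ j, N v ≤ N (toEuclideanCLM (𝕜 := 𝕂) (A j) v)) (n : ℕ)
    (v : EuclideanSpace 𝕂 ι) :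
    ∃ i : Fin n → Fin r, N v ≤ N (toEuclideanCLM (𝕜 := 𝕂) (wordProd A i) v) := by
  induction n with
  | zero => exact ⟨Fin.elim0, by simp [wordProd]⟩
  | succ n ih =>
    obtain ⟨i, hi⟩ := ih
    obtain ⟨j, hj⟩ := hA (toEuclideanCLM (𝕜 := 𝕂) (wordProd A i) v)
    exact ⟨Fin.snoc i j, by rw [wordProd_snoc, map_mul]; exact hi.trans hj⟩

lemma one_le_eNorm_pow_of_apply_eq_self {M : Matrix ι ι 𝕂} {v : EuclideanSpace 𝕂 ι}
    (hv : v ≠ 0) (hMv : toEuclideanCLM (𝕜 := 𝕂) M v = v) (k : ℕ) : 1 ≤ eNorm (M ^ k) := by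
  have hfix : toEuclideanCLM (𝕜 := 𝕂) (M ^ k) v = v := by
    induction k with
    | zero => simp
    | succ k ih => rw [pow_succ, map_mul, mul_apply_eq_comp, hMv, ih]
  have hle := (toEuclideanCLM (𝕜 := 𝕂) (M ^ k)).le_opNorm v
  rw [hfix] at hle
  exact le_of_mul_le_mul_right (by simpa [eNorm] using hle) (norm_pos_iff.2 hv)

def nonexpanding (N : EuclideanSpace 𝕂 ι → ℝ) : Submonoid (Matrix ι ι 𝕂) where
  carrier := {M | ∀ v, N (toEuclideanCLM (𝕜 := 𝕂) M v) ≤ N v}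
  mul_mem' {M M'} hM hM' v := by
    rw [map_mul]
    exact (hM _).trans (hM' v)
  one_mem' v := by simp

lemma continuous_det_toEuclideanCLM_symm :
    Continuous fun T : EuclideanSpace 𝕂 ι →L[𝕂] EuclideanSpace 𝕂 ι =>
      ((toEuclideanCLM (𝕜 := 𝕂) (n := ι)).symm T).det :=
  (LinearMap.continuous_of_finiteDimensional
    (toEuclideanCLM (𝕜 := 𝕂) (n := ι)).symm.toAlgEquiv.toLinearEquiv.toLinearMap).matrix_det

lemma norm_det_wordProd_le {A : Fin r → Matrix ι ι 𝕂} {q : ℝ} (hA : ∀ j, ‖(A j).det‖ ≤ q)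
    {n : ℕ} (i : Fin n → Fin r) : ‖(wordProd A i).det‖ ≤ q ^ n := by
  induction n with
  | zero => simp [wordProd]
  | succ n ih =>
    rw [wordProd_succ, det_mul, norm_mul, pow_succ']
    exact mul_le_mul (hA _) (ih _) (norm_nonneg _) ((norm_nonneg _).trans (hA (i (Fin.last n))))

lemma det_eq_zero_of_mem_limitSemigroup {A : Fin r → Matrix ι ι 𝕂} (hjsr : jsr A = 1)
    {q : ℝ} (hq₀ : 0 ≤ q) (hq : q < 1) (hA : ∀ j, ‖(A j).det‖ ≤ q) {B : Matrix ι ι 𝕂}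
    (hB : B ∈ limitSemigroup A) : B.det = 0 := by
  refine norm_le_zero_iff.1 (le_of_forall_pos_lt_add fun ε hε => ?_)
  obtain ⟨δ, hδ, hclose⟩ := Metric.continuousAt_iff.1
    (continuous_det_toEuclideanCLM_symm.continuousAt (x := toEuclideanCLM (𝕜 := 𝕂) B))
    (ε / 2) (half_pos hε)
  obtain ⟨m, hm⟩ := exists_pow_lt_of_lt_one (half_pos hε) hq
  obtain ⟨n, hmn, i, hi⟩ := hB m δ hδ
  rw [hjsr, one_pow, inv_one, one_smul, eNorm, map_sub, ← dist_eq_norm] at hi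
  have hdet := hclose hi
  simp only [StarAlgEquiv.symm_apply_apply, dist_eq_norm, norm_sub_rev] at hdet
  calc ‖B.det‖ ≤ ‖(wordProd A i).det‖ + ‖B.det - (wordProd A i).det‖ :=
        norm_le_norm_add_norm_sub' _ _
    _ < ε / 2 + ε / 2 := add_lt_add_of_le_of_lt ((norm_det_wordProd_le hA i).trans
        ((pow_le_pow_of_le_one hq₀ hq.le hmn).trans hm.le)) hdet
    _ = 0 + ε := by ring

lemma rank_lt_card_of_det_eq_zero {K : Type*} [Field K] {B : Matrix ι ι K} (h : B.det = 0) :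
    B.rank < Fintype.card ι := by
  have hker : LinearMap.ker B.mulVecLin ≠ ⊥ := fun hbot => by
    obtain ⟨v, hv, hBv⟩ := Matrix.exists_mulVec_eq_zero_iff.2 h
    exact hv (Matrix.ker_mulVecLin_eq_bot_iff.1 hbot v hBv)
  have hsum := LinearMap.finrank_range_add_finrank_ker B.mulVecLin
  rw [Module.finrank_fintype_fun_eq_card] at hsum
  have := Submodule.one_le_finrank_iff.2 hker
  rw [Matrix.rank]
  omega

lemma rank_pos_of_ne_zero {K : Type*} [Field K] {B : Matrix ι ι K} (h : B ≠ 0) : 0 < B.rank := by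
  refine Nat.pos_of_ne_zero fun h0 => h (Matrix.ext fun i j => ?_)
  rw [Matrix.rank, Submodule.finrank_eq_zero, LinearMap.range_eq_bot] at h0
  simpa using congrFun (LinearMap.congr_fun h0 (Pi.single j 1)) i

end General

lemma ciSup_fin_two {α : Type*} [ConditionallyCompleteLinearOrder α] (f : Fin 2 → α) :
    ⨆ i, f i = max (f 0) (f 1) :=
  le_antisymm (ciSup_le fun i => by fin_cases i <;> simp)
    (max_le (le_ciSup (Set.finite_range f).bddAbove 0) (le_ciSup (Set.finite_range f).bddAbove 1))

lemma iInf_rpow_inv_eq_one {b : ℕ+ → ℝ} {C : ℝ} (hlo : ∀ n, 1 ≤ b n) (hhi : ∀ n, b n ≤ C) :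
    ⨅ n : ℕ+, b n ^ ((n : ℝ)⁻¹) = 1 := by
  have hge : ∀ n : ℕ+, 1 ≤ b n ^ ((n : ℝ)⁻¹) := fun n =>
    Real.one_le_rpow (hlo n) (by positivity)
  refine le_antisymm (le_of_forall_gt_imp_ge_of_dense fun t ht => ?_) (le_ciInf hge)
  obtain ⟨k, hk⟩ := pow_unbounded_of_one_lt C ht
  calc ⨅ n : ℕ+, b n ^ ((n : ℝ)⁻¹)
      ≤ b k.succPNat ^ ((k.succPNat : ℝ)⁻¹) := ciInf_le ⟨1, Set.forall_mem_range.2 hge⟩ _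
    _ ≤ (t ^ (k + 1)) ^ ((k.succPNat : ℝ)⁻¹) :=
        Real.rpow_le_rpow (zero_le_one.trans (hlo _))
          ((hhi _).trans (hk.le.trans (pow_le_pow_right₀ ht.le k.le_succ))) (by positivity)
    _ = t := Real.pow_rpow_inv_natCast (by positivity) k.succ_ne_zero

lemma le_of_forall_le_add_mul_pow {a b C q : ℝ} (hq₀ : 0 ≤ q) (hq : q < 1)
    (h : ∀ k : ℕ, a ≤ b + C * q ^ k) : a ≤ b := by
  have hlim : Tendsto (fun k : ℕ => b + C * q ^ k) atTop (𝓝 b) := by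
    simpa using tendsto_const_nhds.add
      (tendsto_const_nhds.mul (tendsto_pow_atTop_nhds_zero_of_lt_one hq₀ hq))
  exact ge_of_tendsto' hlim h

lemma eq_max_of_eq_max_max {a b c α β : ℝ} (hb : 0 ≤ b) (hα : α < 1) (hβ : β < 1)
    (h : a = max (max (α * a) b) (max c (β * a))) : a = max b c := by
  have hle : max b c ≤ a := h ▸ max_le_max (le_max_right _ _) (le_max_left _ _)
  refine le_antisymm (not_lt.1 fun hlt => ?_) hle
  have ha : 0 < a := hb.trans_lt ((le_max_left b c).trans_lt hlt)
  have hmax : max (max (α * a) b) (max c (β * a)) < a :=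
    max_lt (max_lt (by nlinarith) ((le_max_left b c).trans_lt hlt))
      (max_lt ((le_max_right b c).trans_lt hlt) (by nlinarith))
  exact hmax.ne h.symm

lemma pow_mul_add_pow_mul_le {t X Y : ℝ} (ht₀ : 0 ≤ t) (ht₁ : t ≤ 1) (hX : 0 ≤ X) (hY : 0 ≤ Y)
    {a b k : ℕ} (hab : a + b = 2 * k) : t ^ a * X + t ^ b * Y ≤ max X Y + (X + Y) * t ^ k := by
  have hpow : ∀ {m}, k ≤ m → t ^ m ≤ t ^ k := fun hm => pow_le_pow_of_le_one ht₀ ht₁ hm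
  have hone : ∀ m, t ^ m ≤ 1 := fun m => pow_le_one₀ ht₀ ht₁
  rcases le_total k a with hk | hk
  · have := hpow hk
    have := hone b
    nlinarith [le_max_right X Y, pow_nonneg ht₀ k]
  · have := hpow (show k ≤ b by omega)
    have := hone a
    nlinarith [le_max_left X Y, pow_nonneg ht₀ k]

lemma eq_of_forall_ne_succ {a b : ℕ → Fin 2} {m n : ℕ} (ha : ∀ k, a (m + k + 1) ≠ a (m + k))
    (hb : ∀ k, b (n + k + 1) ≠ b (n + k)) (h₀ : a m = b n) (k : ℕ) : a (m + k) = b (n + k) := by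
  induction k with
  | zero => exact h₀
  | succ k ih =>
    have h₁ := ha k
    have h₂ := hb k
    rw [ih] at h₁
    rw [← add_assoc, ← add_assoc]
    omega

lemma eq_of_not_rotEquiv_zero_one {z : Fin 2 → Fin 2} (hz : ¬ RotEquiv z ![0, 1]) : z 1 = z 0 := by
  have hz' : z = ![z 0, z 1] := by ext j; fin_cases j <;> rfl
  rw [hz'] at hz
  generalize z 0 = a, z 1 = b at hz ⊢
  fin_cases a <;> fin_cases b
  exacts [rfl, (hz ⟨0, by decide⟩).elim, (hz ⟨1, by decide⟩).elim, rfl]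

lemma eq_toLp_fin_two {α : Type*} (v : WithLp 2 (Fin 2 → α)) : v = !₂[v 0, v 1] := by
  ext i; fin_cases i <;> rfl

section MaxNorm

variable {𝕂 : Type*} [RCLike 𝕂]

def maxNorm (v : EuclideanSpace 𝕂 (Fin 2)) : ℝ := max ‖v 0‖ ‖v 1‖

lemma isNorm_maxNorm : IsNorm (maxNorm (𝕂 := 𝕂)) := by
  refine ⟨fun v => ?_, fun c v => ?_, fun u v => ?_⟩
  · have hnonneg : 0 ≤ maxNorm v := (norm_nonneg _).trans (le_max_left _ _)
    rw [← hnonneg.ge_iff_eq', maxNorm, max_le_iff, norm_le_zero_iff, norm_le_zero_iff]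
    conv_rhs => rw [eq_toLp_fin_two v]
    simp
  · simp only [maxNorm, PiLp.smul_apply, smul_eq_mul, norm_mul,
      mul_max_of_nonneg _ _ (norm_nonneg c)]
  · simp only [maxNorm, PiLp.add_apply]
    exact max_le ((norm_add_le _ _).trans (add_le_add (le_max_left _ _) (le_max_left _ _)))
      ((norm_add_le _ _).trans (add_le_add (le_max_right _ _) (le_max_right _ _)))

lemma maxNorm_le_norm (v : EuclideanSpace 𝕂 (Fin 2)) : maxNorm v ≤ ‖v‖ :=
  max_le (PiLp.norm_apply_le v 0) (PiLp.norm_apply_le v 1)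

lemma norm_le_sqrt_two_mul_maxNorm (v : EuclideanSpace 𝕂 (Fin 2)) :
    ‖v‖ ≤ √2 * maxNorm v := by
  rw [EuclideanSpace.norm_eq, Fin.sum_univ_two, ← Real.sqrt_sq (isNorm_maxNorm.nonneg v),
    ← Real.sqrt_mul zero_le_two]
  have h₀ : ‖v 0‖ ≤ maxNorm v := le_max_left _ _
  have h₁ : ‖v 1‖ ≤ maxNorm v := le_max_right _ _
  gcongr
  nlinarith [norm_nonneg (v 0), norm_nonneg (v 1)]

lemma eNorm_le_of_maxNorm_apply_le {M : Matrix (Fin 2) (Fin 2) 𝕂} {B : ℝ} (hB : 0 ≤ B)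
    (h : ∀ v, maxNorm (toEuclideanCLM (𝕜 := 𝕂) M v) ≤ B * maxNorm v) : eNorm M ≤ √2 * B :=
  ContinuousLinearMap.opNorm_le_bound _ (by positivity) fun v =>
    calc ‖toEuclideanCLM (𝕜 := 𝕂) M v‖ ≤ √2 * maxNorm (toEuclideanCLM (𝕜 := 𝕂) M v) :=
          norm_le_sqrt_two_mul_maxNorm _
      _ ≤ √2 * (B * ‖v‖) := by gcongr; exact (h v).trans (by gcongr; exact maxNorm_le_norm v)
      _ = √2 * B * ‖v‖ := by ring

lemma eNorm_le_of_mem_nonexpanding {M : Matrix (Fin 2) (Fin 2) 𝕂}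
    (hM : M ∈ nonexpanding maxNorm) : eNorm M ≤ √2 := by
  simpa using eNorm_le_of_maxNorm_apply_le zero_le_one fun v => by simpa using hM v

end MaxNorm

section MaxInvariant

variable {𝕂 : Type*} [RCLike 𝕂]

/-- The equations satisfied by `(x, y) ↦ N(x, y)` for a Barabanov norm `N` of the pair,
with `μ = λ₁λ₂` and `c = N(1, 0)` (`eq_max` is the Barabanov equation applied twice). -/
structure MaxInvariant (f : 𝕂 → 𝕂 → ℝ) (μ : 𝕂) (c : ℝ) : Prop where
  eq_max : ∀ x y, f x y = max (f (μ * x) y) (f x (μ * y))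
  add_le : ∀ x y x' y', f (x + x') (y + y') ≤ f x y + f x' y'
  left : ∀ x, f x 0 = c * ‖x‖
  right : ∀ y, f 0 y = c * ‖y‖

namespace MaxInvariant

variable {f : 𝕂 → 𝕂 → ℝ} {μ : 𝕂} {c : ℝ}

lemma swap (hf : MaxInvariant f μ c) : MaxInvariant (fun x y => f y x) μ c where
  eq_max x y := (hf.eq_max y x).trans (max_comm _ _)
  add_le x y x' y' := hf.add_le y x y' x'
  left := hf.right
  right := hf.left

lemma apply_pow_mul_right_le (hf : MaxInvariant f μ c) (x y : 𝕂) (k : ℕ) :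
    f x (μ ^ k * y) ≤ f x y := by
  induction k generalizing y with
  | zero => simp
  | succ k ih =>
    rw [pow_succ, mul_assoc]
    exact (ih (μ * y)).trans ((hf.eq_max x y).symm ▸ le_max_right _ _)

lemma apply_zero_le (hf : MaxInvariant f μ c) (hμ : ‖μ‖ < 1) (x y : 𝕂) : f x 0 ≤ f x y := by
  refine le_of_forall_le_add_mul_pow (C := c * ‖y‖) (norm_nonneg μ) hμ fun k => ?_
  calc f x 0 = f (x + 0) (μ ^ k * y + -(μ ^ k * y)) := by simp
    _ ≤ f x (μ ^ k * y) + f 0 (-(μ ^ k * y)) := hf.add_le _ _ _ _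
    _ ≤ f x y + c * ‖y‖ * ‖μ‖ ^ k := by
        rw [hf.right, norm_neg, norm_mul, norm_pow, mul_comm (‖μ‖ ^ k), ← mul_assoc]
        exact add_le_add_left (hf.apply_pow_mul_right_le x y k) _

lemma exists_eq_apply_pow_mul (hf : MaxInvariant f μ c) (k : ℕ) (x y : 𝕂) :
    ∃ a b : ℕ, a + b = k ∧ f x y = f (μ ^ a * x) (μ ^ b * y) := by
  induction k generalizing x y with
  | zero => exact ⟨0, 0, rfl, by simp⟩
  | succ k ih =>
    rcases max_choice (f (μ * x) y) (f x (μ * y)) with h | h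
    · obtain ⟨a, b, hab, he⟩ := ih (μ * x) y
      exact ⟨a + 1, b, by omega, by rw [hf.eq_max, h, he, pow_succ, mul_assoc]⟩
    · obtain ⟨a, b, hab, he⟩ := ih x (μ * y)
      exact ⟨a, b + 1, by omega, by rw [hf.eq_max, h, he, pow_succ, mul_assoc]⟩

lemma apply_le (hf : MaxInvariant f μ c) (hμ : ‖μ‖ < 1) (hc : 0 ≤ c) (x y : 𝕂) :
    f x y ≤ c * max ‖x‖ ‖y‖ := by
  refine le_of_forall_le_add_mul_pow (C := c * (‖x‖ + ‖y‖)) (norm_nonneg μ) hμ fun k => ?_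
  obtain ⟨a, b, hab, he⟩ := hf.exists_eq_apply_pow_mul (2 * k) x y
  calc f x y ≤ f (μ ^ a * x) 0 + f 0 (μ ^ b * y) := by
        simpa [he] using hf.add_le (μ ^ a * x) 0 0 (μ ^ b * y)
    _ = c * (‖μ‖ ^ a * ‖x‖ + ‖μ‖ ^ b * ‖y‖) := by
        rw [hf.left, hf.right, norm_mul, norm_mul, norm_pow, norm_pow]; ring
    _ ≤ c * (max ‖x‖ ‖y‖ + (‖x‖ + ‖y‖) * ‖μ‖ ^ k) := mul_le_mul_of_nonneg_left
        (pow_mul_add_pow_mul_le (norm_nonneg μ) hμ.le (norm_nonneg x) (norm_nonneg y) hab) hc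
    _ = c * max ‖x‖ ‖y‖ + c * (‖x‖ + ‖y‖) * ‖μ‖ ^ k := by ring

lemma apply_eq (hf : MaxInvariant f μ c) (hμ : ‖μ‖ < 1) (hc : 0 ≤ c) (x y : 𝕂) :
    f x y = c * max ‖x‖ ‖y‖ := by
  refine le_antisymm (hf.apply_le hμ hc x y) ?_
  rw [mul_max_of_nonneg _ _ hc, ← hf.left, ← hf.right]
  exact max_le (hf.apply_zero_le hμ x y) (hf.swap.apply_zero_le hμ y x)

end MaxInvariant

end MaxInvariant

section AntidiagPair

variable {𝕂 : Type*} [RCLike 𝕂] {lam₁ lam₂ : 𝕂}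

def antidiagPair (lam₁ lam₂ : 𝕂) : Fin 2 → Matrix (Fin 2) (Fin 2) 𝕂 :=
  ![!![0, 1; lam₁, 0], !![0, lam₂; 1, 0]]

@[simp]
lemma antidiagPair_zero_apply (x y : 𝕂) :
    toEuclideanCLM (𝕜 := 𝕂) (antidiagPair lam₁ lam₂ 0) !₂[x, y] = !₂[y, lam₁ * x] := by
  ext i; fin_cases i <;> simp [antidiagPair, mul_comm]

@[simp]
lemma antidiagPair_one_apply (x y : 𝕂) :
    toEuclideanCLM (𝕜 := 𝕂) (antidiagPair lam₁ lam₂ 1) !₂[x, y] = !₂[lam₂ * y, x] := by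
  ext i; fin_cases i <;> simp [antidiagPair, mul_comm]

lemma antidiagPair_mul_self (j : Fin 2) :
    antidiagPair lam₁ lam₂ j * antidiagPair lam₁ lam₂ j = ![lam₁, lam₂] j • 1 := by
  fin_cases j <;> ext a b <;> fin_cases a <;> fin_cases b <;> simp [antidiagPair]

lemma norm_det_antidiagPair (j : Fin 2) :
    ‖(antidiagPair lam₁ lam₂ j).det‖ ≤ max ‖lam₁‖ ‖lam₂‖ := by
  fin_cases j <;> simp [antidiagPair, det_fin_two]

lemma antidiagPair_mem_nonexpanding (h₁ : ‖lam₁‖ ≤ 1) (h₂ : ‖lam₂‖ ≤ 1) (j : Fin 2) :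
    antidiagPair lam₁ lam₂ j ∈ nonexpanding maxNorm := by
  intro v
  rw [eq_toLp_fin_two v]
  fin_cases j <;> simp only [maxNorm, Fin.zero_eta, Fin.mk_one, antidiagPair_zero_apply,
    antidiagPair_one_apply, PiLp.toLp_apply, Matrix.cons_val_zero, Matrix.cons_val_one,
    norm_mul]
  · exact max_le (le_max_right _ _) ((mul_le_of_le_one_left (norm_nonneg _) h₁).trans
      (le_max_left _ _))
  · exact max_le ((mul_le_of_le_one_left (norm_nonneg _) h₂).trans (le_max_right _ _))
      (le_max_left _ _)

lemma iSup_maxNorm_antidiagPair_apply (h₁ : ‖lam₁‖ ≤ 1) (h₂ : ‖lam₂‖ ≤ 1)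
    (v : EuclideanSpace 𝕂 (Fin 2)) :
    ⨆ j, maxNorm (toEuclideanCLM (𝕜 := 𝕂) (antidiagPair lam₁ lam₂ j) v) = maxNorm v := by
  refine le_antisymm (ciSup_le fun j => antidiagPair_mem_nonexpanding h₁ h₂ j v) ?_
  rw [ciSup_fin_two, eq_toLp_fin_two v]
  simp only [maxNorm, antidiagPair_zero_apply, antidiagPair_one_apply, PiLp.toLp_apply,
    Matrix.cons_val_zero, Matrix.cons_val_one]
  exact max_le (le_max_of_le_right (le_max_right _ _)) (le_max_of_le_left (le_max_left _ _))

lemma eNorm_wordProd_antidiagPair_le (h₁ : ‖lam₁‖ ≤ 1) (h₂ : ‖lam₂‖ ≤ 1) {n : ℕ}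
    (i : Fin n → Fin 2) : eNorm (wordProd (antidiagPair lam₁ lam₂) i) ≤ √2 :=
  eNorm_le_of_mem_nonexpanding (wordProd_mem (antidiagPair_mem_nonexpanding h₁ h₂) i)

lemma exists_one_le_eNorm_wordProd_antidiagPair (h₁ : ‖lam₁‖ ≤ 1) (h₂ : ‖lam₂‖ ≤ 1) (n : ℕ) :
    ∃ i : Fin n → Fin 2, 1 ≤ eNorm (wordProd (antidiagPair lam₁ lam₂) i) := by
  have hA : ∀ v, ∃ j,
      maxNorm v ≤ maxNorm (toEuclideanCLM (𝕜 := 𝕂) (antidiagPair lam₁ lam₂ j) v) :=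
    fun v => (exists_eq_ciSup_of_finite (f := fun j =>
      maxNorm (toEuclideanCLM (𝕜 := 𝕂) (antidiagPair lam₁ lam₂ j) v))).imp fun j hj => by
        rw [hj, iSup_maxNorm_antidiagPair_apply h₁ h₂]
  obtain ⟨i, hi⟩ := exists_word_le_apply hA n (EuclideanSpace.single 0 1)
  refine ⟨i, ?_⟩
  calc 1 = maxNorm (EuclideanSpace.single (0 : Fin 2) (1 : 𝕂)) := by simp [maxNorm]
    _ ≤ _ := hi
    _ ≤ ‖toEuclideanCLM (𝕜 := 𝕂) (wordProd (antidiagPair lam₁ lam₂) i)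
          (EuclideanSpace.single 0 1)‖ := maxNorm_le_norm _
    _ ≤ eNorm (wordProd (antidiagPair lam₁ lam₂) i) := by
        simpa [eNorm] using
          ContinuousLinearMap.le_opNorm _ (EuclideanSpace.single (0 : Fin 2) (1 : 𝕂))

lemma jsr_antidiagPair (h₁ : ‖lam₁‖ ≤ 1) (h₂ : ‖lam₂‖ ≤ 1) :
    jsr (antidiagPair lam₁ lam₂) = 1 :=
  iInf_rpow_inv_eq_one
    (fun n => (exists_one_le_eNorm_wordProd_antidiagPair h₁ h₂ n).elim fun i hi =>
      hi.trans (le_ciSup (f := fun i : Fin n → Fin 2 =>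
        eNorm (wordProd (antidiagPair lam₁ lam₂) i)) (Set.finite_range _).bddAbove i))
    (fun _ => ciSup_le (eNorm_wordProd_antidiagPair_le h₁ h₂))

lemma specRad_antidiagPair_mul (h₁ : ‖lam₁‖ ≤ 1) (h₂ : ‖lam₂‖ ≤ 1) :
    specRad (antidiagPair lam₁ lam₂ 0 * antidiagPair lam₁ lam₂ 1) = 1 :=
  iInf_rpow_inv_eq_one
    (fun k => one_le_eNorm_pow_of_apply_eq_self (v := !₂[1, 0]) (by simp) (by
      rw [map_mul, mul_apply_eq_comp, antidiagPair_one_apply, mul_zero, antidiagPair_zero_apply,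
        mul_zero]) k)
    (fun k => eNorm_le_of_mem_nonexpanding (pow_mem (mul_mem
      (antidiagPair_mem_nonexpanding h₁ h₂ 0) (antidiagPair_mem_nonexpanding h₁ h₂ 1)) k))

lemma isBarabanov_maxNorm (h₁ : ‖lam₁‖ ≤ 1) (h₂ : ‖lam₂‖ ≤ 1) :
    IsBarabanov (antidiagPair lam₁ lam₂) maxNorm :=
  ⟨isNorm_maxNorm, fun v => by
    rw [jsr_antidiagPair h₁ h₂, one_mul, iSup_maxNorm_antidiagPair_apply h₁ h₂]⟩

lemma isIrreducible_antidiagPair (h₁ : ‖lam₁‖ < 1) (h₂ : ‖lam₂‖ < 1) :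
    IsIrreducible (antidiagPair lam₁ lam₂) := by
  intro V hV
  refine or_iff_not_imp_left.2 fun hbot => ?_
  have hmem : ∀ j, ∀ w ∈ V, toEuclideanCLM (𝕜 := 𝕂) (antidiagPair lam₁ lam₂ j) w ∈ V := hV
  have he₀ : !₂[1, 0] ∈ V → !₂[0, 1] ∈ V := fun h => by
    simpa only [antidiagPair_one_apply, mul_zero] using hmem 1 _ h
  have he₁ : !₂[0, 1] ∈ V → !₂[1, 0] ∈ V := fun h => by
    simpa only [antidiagPair_zero_apply, mul_zero] using hmem 0 _ h
  suffices h : !₂[1, 0] ∈ V ∨ !₂[0, 1] ∈ V by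
    have h₁₀ : !₂[1, 0] ∈ V := h.elim id he₁
    refine Submodule.eq_top_iff'.2 fun w => ?_
    have hw : w = w 0 • !₂[1, 0] + w 1 • !₂[0, 1] := by ext i; fin_cases i <;> simp
    rw [hw]
    exact V.add_mem (V.smul_mem _ h₁₀) (V.smul_mem _ (he₀ h₁₀))
  obtain ⟨v, hvV, hv0⟩ := Submodule.exists_mem_ne_zero_of_ne_bot hbot
  rw [eq_toLp_fin_two v] at hvV hv0
  generalize v 0 = x, v 1 = y at hvV hv0
  have hμ : 1 - lam₁ * lam₂ ≠ 0 := by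
    refine sub_ne_zero.2 fun h => ?_
    have := mul_lt_one_of_nonneg_of_lt_one_left (norm_nonneg _) h₁ h₂.le
    rw [← norm_mul, ← h, norm_one] at this
    exact lt_irrefl _ this
  -- `v - A₁A₂v` and `v - A₂A₁v` are the two coordinate projections of `v`, scaled by `1 - λ₁λ₂`
  by_cases hx : x = 0
  · have hy : y ≠ 0 := by simpa [hx] using hv0
    refine .inr ((V.smul_mem_iff (mul_ne_zero hμ hy)).1 ?_)
    convert V.sub_mem hvV (hmem 0 _ (hmem 1 _ hvV)) using 1
    rw [antidiagPair_one_apply, antidiagPair_zero_apply]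
    ext i; fin_cases i <;> simp [hx]; ring
  · refine .inl ((V.smul_mem_iff (mul_ne_zero hμ hx)).1 ?_)
    convert V.sub_mem hvV (hmem 1 _ (hmem 0 _ hvV)) using 1
    rw [antidiagPair_zero_apply, antidiagPair_one_apply]
    ext i; fin_cases i <;> simp; ring

lemma strongFinHyp_antidiagPair (h₁ : ‖lam₁‖ < 1) (h₂ : ‖lam₂‖ < 1) :
    StrongFinHyp (antidiagPair lam₁ lam₂) ![0, 1] := by
  intro N hB z hz
  rw [jsr_antidiagPair h₁.le h₂.le, one_pow, wordProd_fin_two, eq_of_not_rotEquiv_zero_one hz,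
    antidiagPair_mul_self]
  refine (opNormWrt_smul_one_le hB.1 _).trans_lt ?_
  generalize z 0 = j
  fin_cases j <;> simpa

lemma rankOneProp_antidiagPair (h₁ : ‖lam₁‖ < 1) (h₂ : ‖lam₂‖ < 1) :
    RankOneProp (antidiagPair lam₁ lam₂) := by
  have hjsr := jsr_antidiagPair h₁.le h₂.le
  refine ⟨⟨hjsr ▸ one_pos, √2, fun n i => ?_⟩, fun B hB hB0 => ?_⟩
  · rw [hjsr, one_pow, mul_one]
    exact eNorm_wordProd_antidiagPair_le h₁.le h₂.le i
  · have hdet := det_eq_zero_of_mem_limitSemigroup hjsr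
      ((norm_nonneg _).trans (le_max_left _ _)) (max_lt h₁ h₂) norm_det_antidiagPair hB
    have hlt := rank_lt_card_of_det_eq_zero hdet
    have hpos := rank_pos_of_ne_zero hB0
    rw [Fintype.card_fin] at hlt
    omega

section Uniqueness

variable {N : EuclideanSpace 𝕂 (Fin 2) → ℝ}

lemma IsBarabanov.apply_eq_max_antidiagPair (hB : IsBarabanov (antidiagPair lam₁ lam₂) N)
    (h₁ : ‖lam₁‖ ≤ 1) (h₂ : ‖lam₂‖ ≤ 1) (x y : 𝕂) :
    N !₂[x, y] = max (N !₂[y, lam₁ * x]) (N !₂[lam₂ * y, x]) := by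
  have h := hB.2 !₂[x, y]
  rwa [jsr_antidiagPair h₁ h₂, one_mul, ciSup_fin_two, antidiagPair_zero_apply,
    antidiagPair_one_apply] at h

lemma IsBarabanov.maxInvariant (hB : IsBarabanov (antidiagPair lam₁ lam₂) N)
    (h₁ : ‖lam₁‖ < 1) (h₂ : ‖lam₂‖ < 1) :
    MaxInvariant (fun x y => N !₂[x, y]) (lam₁ * lam₂) (N !₂[1, 0]) := by
  have hstep := hB.apply_eq_max_antidiagPair h₁.le h₂.le
  have hhom : ∀ c x y : 𝕂, N !₂[c * x, c * y] = ‖c‖ * N !₂[x, y] := fun c x y => by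
    rw [show (!₂[c * x, c * y] : EuclideanSpace 𝕂 (Fin 2)) = c • !₂[x, y] by
      ext i; fin_cases i <;> simp, hB.1.2.1]
  have hleft : ∀ x : 𝕂, N !₂[x, 0] = N !₂[1, 0] * ‖x‖ := fun x => by
    simpa [mul_comm] using hhom x 1 0
  have hswap : ∀ x : 𝕂, N !₂[0, x] = N !₂[x, 0] := fun x => by
    have h := hhom lam₁ 0 x
    rw [mul_zero] at h
    rw [hstep x 0, h, mul_zero, max_eq_right (mul_le_of_le_one_left (hB.1.nonneg _) h₁.le)]
  refine ⟨fun x y => ?_, fun x y x' y' => ?_, hleft, fun y => by rw [hswap, hleft]⟩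
  · refine eq_max_of_eq_max_max (hB.1.nonneg _) h₁ h₂ ((hstep x y).trans ?_)
    rw [hstep y, hstep (lam₂ * y), hhom, hhom, mul_left_comm lam₂ lam₁, mul_assoc, mul_assoc]
  · have hadd : (!₂[x + x', y + y'] : EuclideanSpace 𝕂 (Fin 2)) = !₂[x, y] + !₂[x', y'] := by
      ext i; fin_cases i <;> simp
    simpa only [hadd] using hB.1.2.2 !₂[x, y] !₂[x', y']

lemma IsBarabanov.eq_mul_maxNorm (hB : IsBarabanov (antidiagPair lam₁ lam₂) N)
    (h₁ : ‖lam₁‖ < 1) (h₂ : ‖lam₂‖ < 1) : ∃ c > 0, ∀ v, N v = c * maxNorm v := by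
  have hc : 0 < N !₂[1, 0] :=
    (hB.1.nonneg _).lt_of_ne fun h => by simpa using (hB.1.1 _).1 h.symm
  have hμ : ‖lam₁ * lam₂‖ < 1 := by
    rw [norm_mul]; exact mul_lt_one_of_nonneg_of_lt_one_left (norm_nonneg _) h₁ h₂.le
  refine ⟨_, hc, fun v => ?_⟩
  rw [eq_toLp_fin_two v]
  exact (hB.maxInvariant h₁ h₂).apply_eq hμ hc.le _ _

end Uniqueness

section UnboundedAgreements

lemma antitone_maxNorm_seqProd_apply (h₁ : ‖lam₁‖ ≤ 1) (h₂ : ‖lam₂‖ ≤ 1) (i : ℕ → Fin 2)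
    (v : EuclideanSpace 𝕂 (Fin 2)) :
    Antitone fun n =>
      maxNorm (toEuclideanCLM (𝕜 := 𝕂) (seqProd (antidiagPair lam₁ lam₂) i n) v) :=
  antitone_nat_of_succ_le fun n => by
    rw [seqProd_succ, map_mul, mul_apply_eq_comp]
    exact antidiagPair_mem_nonexpanding h₁ h₂ _ _

lemma maxNorm_seqProd_apply_le_of_eq {i : ℕ → Fin 2} {m : ℕ} (hm : i (m + 2) = i (m + 1))
    (v : EuclideanSpace 𝕂 (Fin 2)) :
    maxNorm (toEuclideanCLM (𝕜 := 𝕂) (seqProd (antidiagPair lam₁ lam₂) i (m + 2)) v) ≤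
      max ‖lam₁‖ ‖lam₂‖ *
        maxNorm (toEuclideanCLM (𝕜 := 𝕂) (seqProd (antidiagPair lam₁ lam₂) i m) v) := by
  rw [seqProd_succ, seqProd_succ, hm, ← mul_assoc, antidiagPair_mul_self, smul_mul_assoc,
    one_mul, map_smul, _root_.smul_apply, isNorm_maxNorm.2.1]
  refine mul_le_mul_of_nonneg_right ?_ (isNorm_maxNorm.nonneg _)
  generalize i (m + 1) = j
  fin_cases j
  exacts [le_max_left _ _, le_max_right _ _]

lemma exists_maxNorm_seqProd_apply_le_pow (h₁ : ‖lam₁‖ < 1) (h₂ : ‖lam₂‖ < 1)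
    {i : ℕ → Fin 2} (hrep : ∀ m, ∃ n ≥ m, i (n + 2) = i (n + 1)) (k : ℕ) :
    ∃ M, ∀ n ≥ M, ∀ v,
      maxNorm (toEuclideanCLM (𝕜 := 𝕂) (seqProd (antidiagPair lam₁ lam₂) i n) v) ≤
        max ‖lam₁‖ ‖lam₂‖ ^ k * maxNorm v := by
  have hanti := antitone_maxNorm_seqProd_apply h₁.le h₂.le i
  induction k with
  | zero => exact ⟨0, fun n _ v => by simpa [seqProd, wordProd] using hanti v (Nat.zero_le n)⟩
  | succ k ih =>
    obtain ⟨M, hM⟩ := ih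
    obtain ⟨m, hmM, hm⟩ := hrep M
    refine ⟨m + 2, fun n hn v => ?_⟩
    calc _ ≤ maxNorm (toEuclideanCLM (𝕜 := 𝕂) (seqProd (antidiagPair lam₁ lam₂) i (m + 2)) v) :=
          hanti v hn
      _ ≤ max ‖lam₁‖ ‖lam₂‖ * (max ‖lam₁‖ ‖lam₂‖ ^ k * maxNorm v) :=
          (maxNorm_seqProd_apply_le_of_eq hm v).trans
            (mul_le_mul_of_nonneg_left (hM m hmM v) ((norm_nonneg _).trans (le_max_left _ _)))
      _ = max ‖lam₁‖ ‖lam₂‖ ^ (k + 1) * maxNorm v := by ring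

lemma eventually_ne_of_frequently_le_eNorm_seqProd (h₁ : ‖lam₁‖ < 1) (h₂ : ‖lam₂‖ < 1)
    {i : ℕ → Fin 2} (hi : ∃ c > (0 : ℝ), ∀ m : ℕ, ∃ n, m ≤ n ∧
      c ≤ eNorm (seqProd (antidiagPair lam₁ lam₂) i n) / jsr (antidiagPair lam₁ lam₂) ^ n) :
    ∃ M, ∀ n ≥ M, i (n + 2) ≠ i (n + 1) := by
  obtain ⟨c, hc, hfreq⟩ := hi
  by_contra! hrep
  obtain ⟨k, hk⟩ := exists_pow_lt_of_lt_one (div_pos hc (by positivity : (0 : ℝ) < √2))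
    (max_lt h₁ h₂)
  obtain ⟨M, hM⟩ := exists_maxNorm_seqProd_apply_le_pow h₁ h₂ hrep k
  obtain ⟨n, hMn, hn⟩ := hfreq M
  rw [jsr_antidiagPair h₁.le h₂.le, one_pow, div_one] at hn
  have hle := eNorm_le_of_maxNorm_apply_le
    (pow_nonneg ((norm_nonneg _).trans (le_max_left _ _)) k) (hM n hMn)
  rw [lt_div_iff₀' (by positivity)] at hk
  linarith

lemma unboundedAgreements_antidiagPair (h₁ : ‖lam₁‖ < 1) (h₂ : ‖lam₂‖ < 1) :
    UnboundedAgreements (antidiagPair lam₁ lam₂) := by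
  intro _ i₁ i₂ hi₁ hi₂
  obtain ⟨M₁, hM₁⟩ := eventually_ne_of_frequently_le_eNorm_seqProd h₁ h₂ hi₁
  obtain ⟨M₂, hM₂⟩ := eventually_ne_of_frequently_le_eNorm_seqProd h₁ h₂ hi₂
  have halt : ∀ {i : ℕ → Fin 2} {M}, (∀ n ≥ M, i (n + 2) ≠ i (n + 1)) →
      ∀ {m}, M + 1 ≤ m → ∀ k, i (m + k + 1) ≠ i (m + k) := fun hM m hm k => by
    have h := hM (m + k - 1) (by omega)
    rwa [show m + k - 1 + 2 = m + k + 1 by omega, show m + k - 1 + 1 = m + k by omega] at h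
  -- an eventually alternating sequence in `Fin 2` takes both values at consecutive times
  obtain ⟨n₂, hn₂, hbase⟩ : ∃ n₂, M₂ + 1 ≤ n₂ ∧ i₁ (M₁ + 1) = i₂ n₂ := by
    by_cases h : i₁ (M₁ + 1) = i₂ (M₂ + 1)
    · exact ⟨M₂ + 1, le_rfl, h⟩
    · refine ⟨M₂ + 2, by omega, ?_⟩
      have := hM₂ M₂ le_rfl
      omega
  exact ⟨M₁ + 1, n₂, fun k _ _ =>
    eq_of_forall_ne_succ (halt hM₁ le_rfl) (halt hM₂ hn₂) hbase k⟩

end UnboundedAgreements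

end AntidiagPair

end JSRPaper

open JSRPaper in
/-- **Example 1.** For `A₁ = [[0,1],[λ₁,0]]`, `A₂ = [[0,λ₂],[1,0]]` with `|λ₁|,|λ₂| < 1`,
the pair `𝒜 = (A₁, A₂)` is irreducible, `ϱ(𝒜) = 1 = ρ(A₁A₂)`, the norm
`‖(x,y)‖ = max {|x|, |y|}` is a Barabanov norm and every Barabanov norm is a scalar
multiple of it, `𝒜` satisfies the strong finiteness hypothesis with characteristic word
`(1,2)`, and `𝒜` has the unbounded agreements and rank one properties. -/
theorem stmt_13 {𝕂 : Type*} [RCLike 𝕂] (lam₁ lam₂ : 𝕂)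
    (h₁ : ‖lam₁‖ < 1) (h₂ : ‖lam₂‖ < 1)
    (A : Fin 2 → Matrix (Fin 2) (Fin 2) 𝕂)
    (hA : A = ![!![0, 1; lam₁, 0], !![0, lam₂; 1, 0]])
    (N₀ : EuclideanSpace 𝕂 (Fin 2) → ℝ)
    (hN₀ : N₀ = fun v => max ‖v 0‖ ‖v 1‖) :
    IsIrreducible A ∧
    jsr A = 1 ∧
    specRad (A 0 * A 1) = 1 ∧
    IsBarabanov A N₀ ∧
    (∀ N : EuclideanSpace 𝕂 (Fin 2) → ℝ, IsBarabanov A N →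
      ∃ c > (0 : ℝ), ∀ v, N v = c * N₀ v) ∧
    StrongFinHyp A (![0, 1] : Fin 2 → Fin 2) ∧
    UnboundedAgreements A ∧
    RankOneProp A := by
  subst hA hN₀
  exact ⟨isIrreducible_antidiagPair h₁ h₂, jsr_antidiagPair h₁.le h₂.le,
    specRad_antidiagPair_mul h₁.le h₂.le, isBarabanov_maxNorm h₁.le h₂.le,
    fun N hN => hN.eq_mul_maxNorm h₁ h₂, strongFinHyp_antidiagPair h₁ h₂,
    unboundedAgreements_antidiagPair h₁ h₂, rankOneProp_antidiagPair h₁ h₂⟩
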